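/- For all integers 0 ≤ k ≤ n − 1, one has D_k(n) ≥ D_k(n−1); equivalently, E_k(n) ≤ E_k(n−1) + 1. -/

import Mathlib

/-- A (binary) decision tree over ground set `[n]` (positions `Fin n`):
leaves are labelled with a Boolean output, inner nodes with a query `i ∈ [n]`;
the left subtree corresponds to the answer `i ∉ A`, the right one to `i ∈ A`. -/
inductive DecTree (n : ℕ) : Type
  | leaf : Bool → DecTree n
  | node : Fin n → DecTree n → DecTree n → DecTree n

namespace DecTree

/-- The height (depth) of a decision tree: the maximum number of queries on a
root-to-leaf path. -/
def depth {n : ℕ} : DecTree n → ℕ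
  | leaf _ => 0
  | node _ t0 t1 => max (depth t0) (depth t1) + 1

/-- Evaluate a decision tree on an input set `A ⊆ [n]`. -/
def eval {n : ℕ} : DecTree n → Finset (Fin n) → Bool
  | leaf b, _ => b
  | node i t0 t1, A => if i ∈ A then eval t1 A else eval t0 A

end DecTree

/-- The slice: the `k`-element subsets of `[n]`. -/
def Slice (n k : ℕ) : Type := {A : Finset (Fin n) // A.card = k}

/-- A decision tree computes `f` on the slice if it evaluates to `f A` for every
`A` in the slice. -/
def Computes {n k : ℕ} (T : DecTree n) (f : Slice n k → Bool) : Prop :=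
  ∀ A : Slice n k, T.eval A.val = f A

/-- Deterministic query complexity of `f` on the slice: the minimum height of a
decision tree computing `f`. -/
noncomputable def Dquery (n k : ℕ) (f : Slice n k → Bool) : ℕ :=
  sInf {d : ℕ | ∃ T : DecTree n, T.depth ≤ d ∧ Computes T f}

/-- `Dmax n k`: the maximum deterministic query complexity over all Boolean
functions on the slice of `k`-subsets of `[n]`. -/
noncomputable def Dmax (n k : ℕ) : ℕ :=
  sSup {d : ℕ | ∃ f : Slice n k → Bool, Dquery n k f = d}

/-- `Equery n k = n - Dmax n k`. -/
noncomputable def Equery (n k : ℕ) : ℕ := n - Dmax n k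

/-!
Deleting the last element of the ground set cannot increase the maximal query complexity: a
function `f` on the slice of `[n - 1]` extends to a function on the slice of `[n]`, and any
decision tree for the extension becomes one for `f`, no deeper, by answering "absent" whenever
it queries the deleted element.
-/

namespace DecTree

def queryAll {n : ℕ} (F : Finset (Fin n) → Bool) : List (Fin n) → Finset (Fin n) → DecTree n
  | [], acc => leaf (F acc)
  | i :: l, acc => node i (queryAll F l acc) (queryAll F l (insert i acc))

theorem depth_queryAll_le {n : ℕ} (F : Finset (Fin n) → Bool) (l : List (Fin n))
    (acc : Finset (Fin n)) : (queryAll F l acc).depth ≤ l.length := by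
  induction l generalizing acc with
  | nil => simp [queryAll, depth]
  | cons i l ih =>
    simpa [queryAll, depth] using ⟨ih acc, ih (insert i acc)⟩

theorem eval_queryAll {n : ℕ} (F : Finset (Fin n) → Bool) (l : List (Fin n))
    (acc A : Finset (Fin n)) :
    (queryAll F l acc).eval A = F (acc ∪ A.filter (· ∈ l)) := by
  induction l generalizing acc with
  | nil => simp [queryAll, eval]
  | cons i l ih =>
    simp only [queryAll, eval]
    split_ifs with hi <;> rw [ih] <;> congr 1 <;> ext a <;> simp <;> grind

def restrictLast {m : ℕ} : DecTree (m + 1) → DecTree m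
  | leaf b => leaf b
  | node i t0 t1 =>
    Fin.lastCases (restrictLast t0) (fun j => node j (restrictLast t0) (restrictLast t1)) i

theorem depth_restrictLast_le {m : ℕ} (T : DecTree (m + 1)) :
    T.restrictLast.depth ≤ T.depth := by
  induction T with
  | leaf b => simp [restrictLast, depth]
  | node i t0 t1 ih0 ih1 =>
    cases i using Fin.lastCases <;> simp [restrictLast, depth] <;> omega

theorem eval_restrictLast {m : ℕ} (T : DecTree (m + 1)) (B : Finset (Fin m)) :
    T.restrictLast.eval B = T.eval (B.map Fin.castSuccEmb) := by
  induction T with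
  | leaf b => rfl
  | node i t0 t1 ih0 ih1 =>
    cases i using Fin.lastCases <;> simp [restrictLast, eval, ih0, ih1]

end DecTree

open DecTree

theorem exists_computes_depth_le {n k : ℕ} (f : Slice n k → Bool) :
    ∃ T : DecTree n, T.depth ≤ n ∧ Computes T f := by
  classical
  let F : Finset (Fin n) → Bool := fun A => if h : A.card = k then f ⟨A, h⟩ else false
  refine ⟨queryAll F (List.finRange n) ∅, ?_, fun A => ?_⟩
  · simpa using depth_queryAll_le F (List.finRange n) ∅
  · simp [eval_queryAll, F, A.2]
    rfl

theorem dquery_le_of_computes {n k : ℕ} {f : Slice n k → Bool} {T : DecTree n}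
    (hT : Computes T f) : Dquery n k f ≤ T.depth :=
  Nat.sInf_le ⟨T, le_rfl, hT⟩

theorem exists_computes_depth_le_dquery {n k : ℕ} (f : Slice n k → Bool) :
    ∃ T : DecTree n, T.depth ≤ Dquery n k f ∧ Computes T f := by
  obtain ⟨T, -, hT⟩ := exists_computes_depth_le f
  exact Nat.sInf_mem (s := {d | ∃ T : DecTree n, T.depth ≤ d ∧ Computes T f})
    ⟨T.depth, T, le_rfl, hT⟩

theorem dquery_le {n k : ℕ} (f : Slice n k → Bool) : Dquery n k f ≤ n := by
  obtain ⟨T, hdepth, hT⟩ := exists_computes_depth_le f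
  exact (dquery_le_of_computes hT).trans hdepth

theorem dquery_le_dmax {n k : ℕ} (f : Slice n k → Bool) : Dquery n k f ≤ Dmax n k :=
  le_csSup ⟨n, by rintro _ ⟨g, rfl⟩; exact dquery_le g⟩ ⟨f, rfl⟩

def Slice.castSucc {m k : ℕ} (A : Slice m k) : Slice (m + 1) k :=
  ⟨A.val.map Fin.castSuccEmb, by rw [Finset.card_map, A.2]⟩

theorem Slice.castSucc_injective {m k : ℕ} :
    Function.Injective (Slice.castSucc : Slice m k → Slice (m + 1) k) :=
  fun _ _ h => Subtype.ext (Finset.map_injective _ (congrArg Subtype.val h))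

theorem Computes.restrictLast {m k : ℕ} {T : DecTree (m + 1)} {g : Slice (m + 1) k → Bool}
    (hT : Computes T g) : Computes T.restrictLast (g ∘ Slice.castSucc) :=
  fun B => (eval_restrictLast T B.val).trans (hT B.castSucc)

theorem dquery_comp_castSucc_le {m k : ℕ} (g : Slice (m + 1) k → Bool) :
    Dquery m k (g ∘ Slice.castSucc) ≤ Dquery (m + 1) k g := by
  obtain ⟨T, hdepth, hT⟩ := exists_computes_depth_le_dquery g
  exact (dquery_le_of_computes hT.restrictLast).trans ((depth_restrictLast_le T).trans hdepth)

theorem dmax_le_dmax_succ (m k : ℕ) : Dmax m k ≤ Dmax (m + 1) k := by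
  refine csSup_le ⟨_, fun _ => false, rfl⟩ ?_
  rintro _ ⟨f, rfl⟩
  let g := Function.extend Slice.castSucc f fun _ => false
  have hg : g ∘ Slice.castSucc = f := Function.extend_comp Slice.castSucc_injective _ _
  calc Dquery m k f = Dquery m k (g ∘ Slice.castSucc) := by rw [hg]
    _ ≤ Dquery (m + 1) k g := dquery_comp_castSucc_le g
    _ ≤ Dmax (m + 1) k := dquery_le_dmax g

theorem stmt_18_general (k n : ℕ) :
    Dmax (n - 1) k ≤ Dmax n k ∧ Equery n k ≤ Equery (n - 1) k + 1 := by
  obtain _ | m := n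
  · simp [Equery]
  have hmono := dmax_le_dmax_succ m k
  exact ⟨hmono, by simp only [Equery, Nat.add_sub_cancel]; omega⟩

/-- For all `0 ≤ k ≤ n - 1`, one has `D_k(n) ≥ D_k(n-1)`, equivalently
`E_k(n) ≤ E_k(n-1) + 1`. -/
theorem stmt_18 (k n : ℕ) (h : k + 1 ≤ n) :
    Dmax (n - 1) k ≤ Dmax n k ∧ Equery n k ≤ Equery (n - 1) k + 1 :=
  stmt_18_general k n
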